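/- Let f : X → X be a homeomorphism of a compact metric space and let ∅ = N⁰ ⊆ N¹ ⊆ ... ⊆ Nˡ = X be a filtration: each Nⁱ compact with f(Nⁱ) ⊆ int(Nⁱ). Then the non-wandering set Ω(f) is contained in the disjoint union over i of Λⁱ(f) := ⋂_{n∈ℤ} fⁿ(Nⁱ \ Nⁱ⁻¹), i.e., Ω(f) = ⋃_{i=1}^{ℓ} Ω(f) ∩ Λⁱ(f). -/
import Mathlib


open Set Function

private lemma fwd_iter {X : Type*} [TopologicalSpace X] (f : X ≃ₜ X) {S : Set X}
    (h : f '' S ⊆ interior S) : ∀ n x, x ∈ S → (⇑f)^[n] x ∈ S := by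
  intro n
  induction n with
  | zero => intro x hx; simpa using hx
  | succ n ih =>
    intro x hx
    rw [Function.iterate_succ_apply]
    exact ih _ (interior_subset (h ⟨x, hx, rfl⟩))

private lemma omega_fwd {X : Type*} [TopologicalSpace X] (f : X ≃ₜ X) {x : X}
    (hx : ∀ U ∈ nhds x, ∃ n : ℕ, 1 ≤ n ∧ ((⇑f)^[n] '' U ∩ U).Nonempty) :
    ∀ U ∈ nhds (f x), ∃ n : ℕ, 1 ≤ n ∧ ((⇑f)^[n] '' U ∩ U).Nonempty := by
  intro V hV
  obtain ⟨n, hn, z, ⟨y, hy, rfl⟩, hz⟩ := hx (f ⁻¹' V) (f.continuous.continuousAt.preimage_mem_nhds hV)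
  refine ⟨n, hn, f ((⇑f)^[n] y), ⟨f y, hy, ?_⟩, hz⟩
  rw [← Function.iterate_succ_apply, Function.iterate_succ_apply']

private lemma omega_bwd {X : Type*} [TopologicalSpace X] (f : X ≃ₜ X) {x : X}
    (hx : ∀ U ∈ nhds x, ∃ n : ℕ, 1 ≤ n ∧ ((⇑f)^[n] '' U ∩ U).Nonempty) :
    ∀ U ∈ nhds (f.symm x), ∃ n : ℕ, 1 ≤ n ∧ ((⇑f)^[n] '' U ∩ U).Nonempty := by
  intro V hV
  obtain ⟨n, hn, z, ⟨y, hy, rfl⟩, hz⟩ := hx (f.symm ⁻¹' V)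
    (f.symm.continuous.continuousAt.preimage_mem_nhds hV)
  have comm : ∀ (m : ℕ) (w : X), f.symm ((⇑f)^[m] w) = (⇑f)^[m] (f.symm w) := by
    intro m
    induction m with
    | zero => intro w; simp
    | succ m ihm =>
      intro w
      simp [Function.iterate_succ_apply, ihm (f w)]
  refine ⟨n, hn, f.symm ((⇑f)^[n] y), ⟨f.symm y, hy, (comm n y).symm⟩, hz⟩

/-- Key lemma: a non-wandering point whose image lies in an attracting block
lies in the block itself. -/
private lemma keyA {X : Type*} [TopologicalSpace X] [T2Space X] (f : X ≃ₜ X) {S : Set X}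
    (hS : IsClosed S) (hfS : f '' S ⊆ interior S) {x : X}
    (hx : ∀ U ∈ nhds x, ∃ n : ℕ, 1 ≤ n ∧ ((⇑f)^[n] '' U ∩ U).Nonempty)
    (hfx : f x ∈ S) : x ∈ S := by
  by_contra hxS
  have hne : f x ≠ x := fun h => hxS (h ▸ hfx)
  obtain ⟨V₂, V₁, hV₂o, hV₁o, hfxV₂, hxV₁, hdisj⟩ := t2_separation hne
  have h2 : f (f x) ∈ interior S := hfS ⟨f x, hfx, rfl⟩
  set U : Set X := V₁ ∩ f ⁻¹' V₂ ∩ Sᶜ ∩ f ⁻¹' (f ⁻¹' (interior S)) with hUdef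
  have hUnhds : U ∈ nhds x := by
    have hUopen : IsOpen U :=
      (((hV₁o.inter (hV₂o.preimage f.continuous)).inter hS.isOpen_compl).inter
        ((isOpen_interior.preimage f.continuous).preimage f.continuous))
    exact hUopen.mem_nhds ⟨⟨⟨hxV₁, hfxV₂⟩, hxS⟩, h2⟩
  obtain ⟨n, hn, z, ⟨y, hy, rfl⟩, hz⟩ := hx U hUnhds
  obtain ⟨⟨⟨hyV₁, hyV₂⟩, hyS⟩, hy2⟩ := hy
  rcases Nat.lt_or_ge n 2 with h2' | h2'
  · -- n = 1
    interval_cases n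
    exact Set.disjoint_right.mp hdisj (by simpa using hz.1.1.1) hyV₂
  · -- n ≥ 2
    obtain ⟨m, rfl⟩ := Nat.exists_eq_add_of_le h2'
    have h22 : (⇑f)^[2 + m] y = (⇑f)^[m] ((⇑f)^[2] y) := by
      rw [Nat.add_comm, Function.iterate_add_apply]
    have hffy : (⇑f)^[2] y ∈ S := by
      have : f (f y) ∈ interior S := hy2
      simpa [Function.iterate_succ_apply] using interior_subset this
    have : (⇑f)^[2 + m] y ∈ S := by
      rw [h22]; exact fwd_iter f hfS m _ hffy
    exact hz.1.2 this

private lemma back_iter {X : Type*} [TopologicalSpace X] [T2Space X] (f : X ≃ₜ X) {S : Set X}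
    (hS : IsClosed S) (hfS : f '' S ⊆ interior S) :
    ∀ (n : ℕ) (x : X),
      (∀ U ∈ nhds x, ∃ n : ℕ, 1 ≤ n ∧ ((⇑f)^[n] '' U ∩ U).Nonempty) →
      (⇑f)^[n] x ∈ S → x ∈ S := by
  intro n
  induction n with
  | zero => intro x _ h; simpa using h
  | succ n ih =>
    intro x hx h
    rw [Function.iterate_succ_apply] at h
    exact keyA f hS hfS hx (ih (f x) (omega_fwd f hx) h)

/-- Filtration decomposition of the non-wandering set: given a filtration
`∅ = N⁰ ⊆ N¹ ⊆ ... ⊆ Nˡ = X` for a homeomorphism `f` of a compact metric space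
(each `Nⁱ` compact with `f(Nⁱ) ⊆ int Nⁱ`), setting
`Λⁱ(f) = ⋂_{n∈ℤ} fⁿ(Nⁱ \ Nⁱ⁻¹)`, the sets `Λⁱ(f)` (`1 ≤ i ≤ ℓ`) are pairwise
disjoint and the non-wandering set `Ω(f)` equals `⋃_{i=1}^ℓ Ω(f) ∩ Λⁱ(f)`. -/
theorem stmt_16 {X : Type*} [MetricSpace X] [CompactSpace X]
    (f : X ≃ₜ X) (ℓ : ℕ) (hℓ : 1 ≤ ℓ) (N : ℕ → Set X)
    (h0 : N 0 = ∅) (htop : N ℓ = Set.univ)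
    (hmono : ∀ i < ℓ, N i ⊆ N (i + 1))
    (hcpt : ∀ i ≤ ℓ, IsCompact (N i))
    (hfil : ∀ i ≤ ℓ, f '' N i ⊆ interior (N i)) :
    (Set.Pairwise (Set.Icc 1 ℓ) fun i j => Disjoint
      ((⋂ n : ℕ, (⇑f)^[n] '' (N i \ N (i - 1))) ∩
        ⋂ n : ℕ, (⇑f.symm)^[n] '' (N i \ N (i - 1)))
      ((⋂ n : ℕ, (⇑f)^[n] '' (N j \ N (j - 1))) ∩
        ⋂ n : ℕ, (⇑f.symm)^[n] '' (N j \ N (j - 1)))) ∧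
    {x : X | ∀ U ∈ nhds x, ∃ n : ℕ, 1 ≤ n ∧ ((⇑f)^[n] '' U ∩ U).Nonempty} =
      ⋃ i ∈ Set.Icc 1 ℓ,
        {x : X | ∀ U ∈ nhds x, ∃ n : ℕ, 1 ≤ n ∧ ((⇑f)^[n] '' U ∩ U).Nonempty} ∩
        ((⋂ n : ℕ, (⇑f)^[n] '' (N i \ N (i - 1))) ∩
          ⋂ n : ℕ, (⇑f.symm)^[n] '' (N i \ N (i - 1))) := by
  classical
  -- chain monotonicity
  have chain : ∀ a b, a ≤ b → b ≤ ℓ → N a ⊆ N b := by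
    intro a b hab hbl
    induction b with
    | zero => simp [Nat.le_zero.mp hab]
    | succ b ih =>
      rcases Nat.lt_or_ge a (b + 1) with h | h
      · exact (ih (Nat.lt_succ_iff.mp h) ((Nat.le_succ b).trans hbl)).trans
          (hmono b (Nat.lt_of_lt_of_le (Nat.lt_succ_self b) hbl))
      · have : a = b + 1 := le_antisymm hab h
        rw [this]
  constructor
  · -- pairwise disjoint
    have aux : ∀ i j, i ∈ Set.Icc 1 ℓ → j ∈ Set.Icc 1 ℓ → i < j → Disjoint
        ((⋂ n : ℕ, (⇑f)^[n] '' (N i \ N (i - 1))) ∩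
          ⋂ n : ℕ, (⇑f.symm)^[n] '' (N i \ N (i - 1)))
        ((⋂ n : ℕ, (⇑f)^[n] '' (N j \ N (j - 1))) ∩
          ⋂ n : ℕ, (⇑f.symm)^[n] '' (N j \ N (j - 1))) := by
      intro i j hi hj hij
      rw [Set.disjoint_left]
      rintro x ⟨hxi, -⟩ ⟨hxj, -⟩
      have h1 : x ∈ N i \ N (i - 1) := by
        have := Set.mem_iInter.mp hxi 0; simpa using this
      have h2 : x ∈ N j \ N (j - 1) := by
        have := Set.mem_iInter.mp hxj 0; simpa using this
      have : N i ⊆ N (j - 1) :=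
        chain i (j - 1) (Nat.le_sub_one_of_lt hij) (le_trans (Nat.sub_le j 1) hj.2)
      exact h2.2 (this h1.1)
    intro i hi j hj hij
    rcases lt_or_gt_of_ne hij with h | h
    · exact aux i j hi hj h
    · exact (aux j i hj hi h).symm
  · -- set equality
    ext x
    simp only [Set.mem_setOf_eq, Set.mem_iUnion, Set.mem_inter_iff, Set.mem_Icc]
    constructor
    · intro hx
      have hexn : ∃ j, x ∈ N j := ⟨ℓ, htop ▸ Set.mem_univ x⟩
      set i := Nat.find hexn with hidef
      have hxi : x ∈ N i := Nat.find_spec hexn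
      have hil : i ≤ ℓ := Nat.find_le (htop ▸ Set.mem_univ x)
      have hi1 : 1 ≤ i := by
        rcases Nat.eq_zero_or_pos i with h | h
        · exact absurd (h ▸ hxi) (by simp [h0])
        · exact h
      have hxim : x ∉ N (i - 1) := Nat.find_min hexn (Nat.sub_lt hi1 one_pos)
      -- Omega-invariance along the orbit
      have hΩfwd : ∀ n : ℕ, ∀ U ∈ nhds ((⇑f)^[n] x),
          ∃ m : ℕ, 1 ≤ m ∧ ((⇑f)^[m] '' U ∩ U).Nonempty := by
        intro n
        induction n with
        | zero => simpa using hx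
        | succ n ih =>
          rw [Function.iterate_succ_apply']
          exact omega_fwd f ih
      have hΩbwd : ∀ n : ℕ, ∀ U ∈ nhds ((⇑f.symm)^[n] x),
          ∃ m : ℕ, 1 ≤ m ∧ ((⇑f)^[m] '' U ∩ U).Nonempty := by
        intro n
        induction n with
        | zero => simpa using hx
        | succ n ih =>
          rw [Function.iterate_succ_apply']
          exact omega_bwd f ih
      -- inverses
      have hLI : ∀ n : ℕ, ∀ y : X, (⇑f.symm)^[n] ((⇑f)^[n] y) = y := fun n =>
        f.left_inv.iterate n
      have hRI : ∀ n : ℕ, ∀ y : X, (⇑f)^[n] ((⇑f.symm)^[n] y) = y := fun n =>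
        f.right_inv.iterate n
      have hclosed : ∀ k ≤ ℓ, IsClosed (N k) := fun k hk => (hcpt k hk).isClosed
      -- forward orbit stays in N i
      have hfwdNi : ∀ n : ℕ, (⇑f)^[n] x ∈ N i := fun n =>
        fwd_iter f (hfil i hil) n x hxi
      -- forward orbit avoids N (i-1)
      have hfwdNim : ∀ n : ℕ, (⇑f)^[n] x ∉ N (i - 1) := by
        intro n hmem
        exact hxim (back_iter f (hclosed _ (le_trans (Nat.sub_le i 1) hil))
          (hfil _ (le_trans (Nat.sub_le i 1) hil)) n x hx hmem)
      -- backward orbit stays in N i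
      have hbwdNi : ∀ n : ℕ, (⇑f.symm)^[n] x ∈ N i := by
        intro n
        have : (⇑f)^[n] ((⇑f.symm)^[n] x) ∈ N i := by rw [hRI n x]; exact hxi
        exact back_iter f (hclosed i hil) (hfil i hil) n _ (hΩbwd n) this
      -- backward orbit avoids N (i-1)
      have hbwdNim : ∀ n : ℕ, (⇑f.symm)^[n] x ∉ N (i - 1) := by
        intro n hmem
        have : (⇑f)^[n] ((⇑f.symm)^[n] x) ∈ N (i - 1) :=
          fwd_iter f (hfil _ (le_trans (Nat.sub_le i 1) hil)) n _ hmem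
        rw [hRI n x] at this
        exact hxim this
      refine ⟨i, ⟨hi1, hil⟩, hx, ?_, ?_⟩
      · exact Set.mem_iInter.mpr fun n =>
          ⟨(⇑f.symm)^[n] x, ⟨hbwdNi n, hbwdNim n⟩, hRI n x⟩
      · exact Set.mem_iInter.mpr fun n =>
          ⟨(⇑f)^[n] x, ⟨hfwdNi n, hfwdNim n⟩, hLI n x⟩
    · rintro ⟨i, -, hx, -⟩
      exact hx
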